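/- arXiv:1407.5046 — 3 statements merged into one kernel-verified Lean document; each statement's English description precedes it below -/
import Mathlib

section
/- Let K > 0 and −4K² < ω < −3K², let c_2 satisfy −(4K² + ω)/2 ≤ c_2 < 0, and set α = −(4K³ + ωK)/c_2. Then α > 0 and the polynomial P(k) = 4k³ + ωk + αc_2 satisfies P(c_2/(2α)) < 0 and P'(c_2/(2α)) < 0. -/
/-- For `K > 0`, `−4K² < ω < −3K²`, `−(4K² + ω)/2 ≤ c₂ < 0`, and
`α = −(4K³ + ωK)/c₂`, one has `α > 0`, `P(c₂/(2α)) < 0`, and `P'(c₂/(2α)) < 0`,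
where `P(k) = 4k³ + ωk + αc₂`. -/
theorem cubic_at_branch_point (K ω c₂ : ℝ) (hK : 0 < K)
    (hω₁ : -4 * K ^ 2 < ω) (hω₂ : ω < -3 * K ^ 2)
    (hc₂₁ : -(4 * K ^ 2 + ω) / 2 ≤ c₂) (hc₂₂ : c₂ < 0) :
    let α : ℝ := -(4 * K ^ 3 + ω * K) / c₂
    let P : ℝ → ℝ := fun k => 4 * k ^ 3 + ω * k + α * c₂
    0 < α ∧ P (c₂ / (2 * α)) < 0 ∧ deriv P (c₂ / (2 * α)) < 0 := by
  intro α P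
  have hA1 : 0 < 4 * K ^ 2 + ω := by nlinarith
  have hA2 : 4 * K ^ 2 + ω < K ^ 2 := by nlinarith
  have hB : 0 < 4 * K ^ 3 + ω * K := by nlinarith
  have hc₂ : c₂ ≠ 0 := ne_of_lt hc₂₂
  have hα : 0 < α := by
    have : α = (4 * K ^ 3 + ω * K) / (-c₂) := by
      simp only [α]; rw [div_neg, neg_div]
    rw [this]
    exact div_pos hB (by linarith)
  set x : ℝ := c₂ / (2 * α) with hxdef
  have hαc : α * c₂ = -(4 * K ^ 3 + ω * K) := by
    simp only [α]; field_simp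
  have hx : x = -c₂ ^ 2 / (2 * (4 * K ^ 3 + ω * K)) := by
    simp only [hxdef, α]
    rw [div_eq_div_iff (by positivity) (by positivity)]
    field_simp
  have hx1 : x < 0 := div_neg_of_neg_of_pos hc₂₂ (by positivity)
  clear_value x
  clear hxdef
  have hx2 : -((4 * K ^ 2 + ω) / (8 * K)) ≤ x := by
    rw [hx, neg_div, neg_le_neg_iff, div_le_div_iff₀ (by positivity) (by positivity)]
    have hb : c₂ ^ 2 ≤ ((4 * K ^ 2 + ω) / 2) ^ 2 := by
      nlinarith [sq_nonneg (c₂ + (4 * K ^ 2 + ω) / 2)]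
    nlinarith [mul_pos hK hA1, mul_pos hA1 hA1]
  have hPx : P x = 4 * x ^ 3 + ω * x - (4 * K ^ 3 + ω * K) := by
    simp only [P, hαc]; ring
  have hωx : ω * x ≤ 4 * K ^ 2 * (-x) := by
    nlinarith [mul_nonneg hA1.le (neg_nonneg.mpr hx1.le)]
  have hnx : -x ≤ (4 * K ^ 2 + ω) / (8 * K) := by linarith
  constructor
  · exact hα
  constructor
  · rw [hPx]
    have h3 : 4 * x ^ 3 < 0 := by nlinarith [mul_pos (mul_pos (neg_pos.mpr hx1) (neg_pos.mpr hx1)) (neg_pos.mpr hx1)]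
    have h4 : 4 * K ^ 2 * (-x) ≤ K * (4 * K ^ 2 + ω) / 2 := by
      have h := mul_le_mul_of_nonneg_left hnx (by positivity : (0:ℝ) ≤ 4 * K ^ 2)
      have heq : 4 * K ^ 2 * ((4 * K ^ 2 + ω) / (8 * K)) = K * (4 * K ^ 2 + ω) / 2 := by
        field_simp; ring
      linarith [heq ▸ h]
    have h6 : K * (4 * K ^ 2 + ω) = 4 * K ^ 3 + ω * K := by ring
    nlinarith [mul_pos hK hA1]
  · have hd : deriv P x = 12 * x ^ 2 + ω := by
      have h : HasDerivAt P (4 * (3 * x ^ 2) + ω * 1 + 0) x := by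
        exact (((hasDerivAt_pow 3 x).const_mul 4).add
          ((hasDerivAt_id x).const_mul ω)).add (hasDerivAt_const x (α * c₂))
      have := h.deriv
      rw [this]; ring
    rw [hd]
    clear hd hPx
    have hxsq : x ^ 2 ≤ ((4 * K ^ 2 + ω) / (8 * K)) ^ 2 := by
      nlinarith [mul_nonneg (by linarith : (0:ℝ) ≤ (4 * K ^ 2 + ω) / (8 * K) + x)
        (by nlinarith [div_nonneg hA1.le (by positivity : (0:ℝ) ≤ 8 * K)] : (0:ℝ) ≤ (4 * K ^ 2 + ω) / (8 * K) - x)]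
    have hsq : ((4 * K ^ 2 + ω) / (8 * K)) ^ 2 = (4 * K ^ 2 + ω) ^ 2 / (64 * K ^ 2) := by
      rw [div_pow]; ring_nf
    have hA3 : (4 * K ^ 2 + ω) ^ 2 < K ^ 4 := by nlinarith [mul_lt_mul'' hA2 hA2 hA1.le hA1.le]
    have h64 : (0:ℝ) < 64 * K ^ 2 := by positivity
    have h1 : (4 * K ^ 2 + ω) ^ 2 / (64 * K ^ 2) < K ^ 4 / (64 * K ^ 2) :=
      (div_lt_div_iff_of_pos_right h64).mpr hA3
    have h2 : K ^ 4 / (64 * K ^ 2) = K ^ 2 / 64 := by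
      rw [div_eq_div_iff h64.ne' (by norm_num : (64:ℝ) ≠ 0)]; ring
    rw [h2] at h1
    rw [hsq] at hxsq
    linarith [sq_nonneg K, hxsq, h1, hω₂]
end

section
/- Let α > 0, c_2 > 0 and K > 0 with 4K³ + ωK + αc_2 = 0, and suppose additionally (α² + ω/2)² − c_2² − 2K²(6K² + ω) ≥ 0 and ω ≤ −12K². Then c_2 ≤ −(4K² + ω)/2. -/
/-- If `α > 0`, `c₂ > 0`, `K > 0`, `4K³ + ωK + αc₂ = 0`,
`(α² + ω/2)² − c₂² − 2K²(6K² + ω) ≥ 0`, and `ω ≤ −12K²`, then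
`c₂ ≤ −(4K² + ω)/2`. -/
theorem c2_upper_bound (K ω α c₂ : ℝ) (hK : 0 < K) (hα : 0 < α) (hc₂ : 0 < c₂)
    (hroot : 4 * K ^ 3 + ω * K + α * c₂ = 0)
    (hnonneg : (α ^ 2 + ω / 2) ^ 2 - c₂ ^ 2 - 2 * K ^ 2 * (6 * K ^ 2 + ω) ≥ 0)
    (hω : ω ≤ -12 * K ^ 2) :
    c₂ ≤ -(4 * K ^ 2 + ω) / 2 := by
  have hid : 4*c₂^4 * ((α^2+ω/2)^2 - c₂^2 - 2*K^2*(6*K^2+ω))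
      = (c₂^2+2*K^2*(4*K^2+ω))^2*((4*K^2+ω)^2-4*c₂^2) := by
    linear_combination (α*c₂ - K*(4*K^2+ω)) * (4*α^2*c₂^2 + 4*K^2*(4*K^2+ω)^2 + 4*ω*c₂^2) * hroot
  have key : (c₂^2+2*K^2*(4*K^2+ω))^2*((4*K^2+ω)^2-4*c₂^2) ≥ 0 := by
    rw [← hid]; positivity
  by_contra h
  push_neg at h
  have h1 : 2*c₂ + 4*K^2 + ω > 0 := by linarith
  have h2 : 2*c₂ - (4*K^2+ω) > 0 := by nlinarith
  have h3 : 4*c₂^2 - (4*K^2+ω)^2 > 0 := by nlinarith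
  have h5 : (4*K^2+ω)*(12*K^2+ω) ≥ 0 := by nlinarith [sq_nonneg (8*K^2+ω)]
  have hs : c₂^2+2*K^2*(4*K^2+ω) > 0 := by nlinarith
  nlinarith [key, mul_pos (mul_pos hs hs) h3]
end

section
/- Let α > 0, ω ∈ ℝ with ω = −3(αc_2)^{2/3} and c_2 > 0, and set K = √(|ω|/12) = (αc_2)^{1/3}/2. Then K is a zero of Ω²(k) = 4k^4 + 2ωk² + 4αc_2 k + (ω/2 + α²)² − |c|² (with c = c_1 + ic_2) if and only if c_1² = (3α² + ω)³/(27α²), and in that case K is a zero of order at least 3. -/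
/-- For `α > 0`, `c₂ > 0`, `ω = −3(αc₂)^{2/3}` and `K = (αc₂)^{1/3}/2`,
the point `K` is a zero of `Ω²(k) = 4k⁴ + 2ωk² + 4αc₂k + (ω/2 + α²)² − (c₁² + c₂²)`
iff `c₁² = (3α² + ω)³/(27α²)`, in which case `K` is a zero of order at least 3. -/
theorem triple_zero_condition (α c₂ c₁ : ℝ) (hα : 0 < α) (hc₂ : 0 < c₂) :
    let ω : ℝ := -3 * (α * c₂) ^ ((2 : ℝ) / 3)
    let K : ℝ := (α * c₂) ^ ((1 : ℝ) / 3) / 2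
    let Ω2 : ℝ → ℝ := fun k =>
      4 * k ^ 4 + 2 * ω * k ^ 2 + 4 * α * c₂ * k +
        ((ω / 2 + α ^ 2) ^ 2 - (c₁ ^ 2 + c₂ ^ 2))
    (Ω2 K = 0 ↔ c₁ ^ 2 = (3 * α ^ 2 + ω) ^ 3 / (27 * α ^ 2)) ∧
    (Ω2 K = 0 → deriv Ω2 K = 0 ∧ deriv (deriv Ω2) K = 0) := by
  intro ω K Ω2
  have hpos : (0 : ℝ) < α * c₂ := mul_pos hα hc₂
  set t : ℝ := (α * c₂) ^ ((1 : ℝ) / 3) with ht_def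
  have ht3 : t ^ 3 = α * c₂ := by
    rw [ht_def, ← Real.rpow_natCast ((α * c₂) ^ ((1:ℝ)/3)) 3,
      ← Real.rpow_mul hpos.le]
    norm_num
  have ht2 : (α * c₂) ^ ((2 : ℝ) / 3) = t ^ 2 := by
    rw [ht_def, ← Real.rpow_natCast ((α * c₂) ^ ((1:ℝ)/3)) 2,
      ← Real.rpow_mul hpos.le]
    norm_num
  have hω : ω = -3 * t ^ 2 := by simp [ω, ht2]
  have hK : K = t / 2 := rfl
  have hα' : α ≠ 0 := ne_of_gt hα
  have hc2 : c₂ = t ^ 3 / α := by field_simp [ht3]; linarith [ht3]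
  -- derivative facts
  have hderiv : deriv Ω2 = fun k => 16 * k ^ 3 + 4 * ω * k + 4 * α * c₂ := by
    funext k
    have h : HasDerivAt Ω2 (16 * k ^ 3 + 4 * ω * k + 4 * α * c₂) k := by
      have h1 : HasDerivAt (fun k : ℝ => 4 * k ^ 4) (4 * (4 * k ^ 3)) k :=
        (hasDerivAt_pow 4 k).const_mul 4
      have h2 : HasDerivAt (fun k : ℝ => 2 * ω * k ^ 2) (2 * ω * (2 * k)) k := by
        simpa using (hasDerivAt_pow 2 k).const_mul (2 * ω)
      have h3 : HasDerivAt (fun k : ℝ => 4 * α * c₂ * k) (4 * α * c₂) k := by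
        simpa using (hasDerivAt_id k).const_mul (4 * α * c₂)
      have h4 : HasDerivAt (fun _ : ℝ => (ω / 2 + α ^ 2) ^ 2 - (c₁ ^ 2 + c₂ ^ 2)) 0 k :=
        hasDerivAt_const _ _
      have := ((h1.add h2).add h3).add h4
      exact this.congr_deriv (by ring)
    exact h.deriv
  have hderiv2 : deriv (deriv Ω2) = fun k => 48 * k ^ 2 + 4 * ω := by
    rw [hderiv]
    funext k
    have h : HasDerivAt (fun k : ℝ => 16 * k ^ 3 + 4 * ω * k + 4 * α * c₂)
        (48 * k ^ 2 + 4 * ω) k := by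
      have h1 : HasDerivAt (fun k : ℝ => 16 * k ^ 3) (16 * (3 * k ^ 2)) k :=
        (hasDerivAt_pow 3 k).const_mul 16
      have h2 : HasDerivAt (fun k : ℝ => 4 * ω * k) (4 * ω) k := by
        simpa using (hasDerivAt_id k).const_mul (4 * ω)
      have h3 : HasDerivAt (fun _ : ℝ => 4 * α * c₂) 0 k := hasDerivAt_const _ _
      have := (h1.add h2).add h3
      exact this.congr_deriv (by ring)
    exact h.deriv
  constructor
  · -- iff
    have hval : Ω2 K = 3 * t ^ 4 - 3 * α ^ 2 * t ^ 2 + α ^ 4 - c₁ ^ 2 - c₂ ^ 2 := by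
      simp only [Ω2, hK, hω]
      linear_combination (-2 * t) * ht3
    have hrhs : (3 * α ^ 2 + ω) ^ 3 / (27 * α ^ 2)
        = α ^ 4 - 3 * α ^ 2 * t ^ 2 + 3 * t ^ 4 - c₂ ^ 2 := by
      rw [hω, hc2]
      field_simp
      ring
    rw [hval, hrhs]
    constructor <;> intro h <;> linarith
  · intro _
    rw [hderiv2, hderiv]
    constructor
    · simp only [hK, hω]
      linear_combination (-4 : ℝ) * ht3
    · simp only [hK, hω]; ring
end
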